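/- For all s ∈ ℝ and 0 ≤ t < u ≤ T, the total variation in z of the s-derivative of the Gaussian kernel satisfies ∫_ℝ |∂_s φ(s,t,z,u)| dz = √(2/π) · μ(u,t)/σ₁(u,t) ≤ √(2/π) · 1/(σ√(u−t)); in particular sup_{s∈ℝ} ∫_ℝ |∂_s φ(s,t,z,u)| dz ≤ c/√(u−t) with c = √(2/π)/σ. -/

import Mathlib

open Real MeasureTheory Set Filter

noncomputable section

/-- `γ₁ = σ²/(1-γ)`. -/
def gam1 (σ γ : ℝ) : ℝ := σ ^ 2 / (1 - γ)

/-- `γ₂ = γκ₁/(1-γ) + κ` with `κ₁ = κ + r`. -/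
def gam2 (κ σ r γ : ℝ) : ℝ := γ * (κ + r) / (1 - γ) + κ

/-- `γ₃ = γκ₁²/((1-γ)σ²)`. -/
def gam3 (κ σ r γ : ℝ) : ℝ := γ * (κ + r) ^ 2 / ((1 - γ) * σ ^ 2)

/-- `ǧ₂ = γ₂/γ₁`. -/
def gc2 (κ σ r γ : ℝ) : ℝ := gam2 κ σ r γ / gam1 σ γ

/-- `ǧ₃ = γ₃/γ₁`. -/
def gc3 (κ σ r γ : ℝ) : ℝ := gam3 κ σ r γ / gam1 σ γ

/-- `ϑ = √(ǧ₂² − ǧ₃)`. -/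
def theta (κ σ r γ : ℝ) : ℝ := Real.sqrt (gc2 κ σ r γ ^ 2 - gc3 κ σ r γ)

/-- The explicit solution `g(t)` of the Riccati equation; `ω = 2ϑγ₁`. -/
def gfun (κ σ r γ T t : ℝ) : ℝ :=
  gc2 κ σ r γ - theta κ σ r γ -
    2 * theta κ σ r γ * (gc2 κ σ r γ - theta κ σ r γ) /
      (Real.exp (2 * theta κ σ r γ * gam1 σ γ * (T - t)) * (gc2 κ σ r γ + theta κ σ r γ) -
        gc2 κ σ r γ + theta κ σ r γ)

/-- `g₁(t) = γ₁ g(t) − γ₂`. -/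
def g1fun (κ σ r γ T t : ℝ) : ℝ := gam1 σ γ * gfun κ σ r γ T t - gam2 κ σ r γ

/-- `μ(u,t) = exp(∫_t^u g₁(v) dv)`. -/
def mufun (κ σ r γ T u t : ℝ) : ℝ := Real.exp (∫ v in t..u, g1fun κ σ r γ T v)

/-- `σ₁(u,t) = √(σ² ∫_t^u μ(u,z)² dz)`. -/
def sig1fun (κ σ r γ T u t : ℝ) : ℝ :=
  Real.sqrt (σ ^ 2 * ∫ z in t..u, mufun κ σ r γ T u z ^ 2)

/-- The Gaussian kernel `φ(s,t,z,u)`. -/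
def phifun (κ σ r γ T s t z u : ℝ) : ℝ :=
  (Real.sqrt (2 * Real.pi) * sig1fun κ σ r γ T u t)⁻¹ *
    Real.exp (-(z - s * mufun κ σ r γ T u t) ^ 2 / (2 * sig1fun κ σ r γ T u t ^ 2))

/-- `G(s,t,y) = exp(−(s²g(t)/2 + y)/(1−γ))`. -/
def Gfun (κ σ r γ T s t y : ℝ) : ℝ :=
  Real.exp (-(s ^ 2 * gfun κ σ r γ T t / 2 + y) / (1 - γ))

/-- `Γ₀(s,t,y₁,y₂)`. -/
def Gamma0 (κ σ r γ ϖ T s t y₁ y₂ : ℝ) : ℝ :=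
  σ ^ 2 * y₂ ^ 2 / (2 * (1 - γ)) + σ ^ 2 * gfun κ σ r γ T t / 2 + r * γ +
    (1 - γ) * ϖ ^ (1 / (γ - 1)) * Gfun κ σ r γ T s t y₁

/-- `Ψ_h(s,t) = Γ₀(s,t,h(s,t),∂_s h(s,t))`. -/
def Psifun (κ σ r γ ϖ T : ℝ) (h : ℝ → ℝ → ℝ) (s t : ℝ) : ℝ :=
  Gamma0 κ σ r γ ϖ T s t (h s t) (deriv (fun s' => h s' t) s)

/-- The Feynman–Kac mapping `ℒ_h(s,t) = ∫_t^T ∫_ℝ Ψ_h(z,u) φ(s,t,z,u) dz du`. -/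
def FK (κ σ r γ ϖ T : ℝ) (h : ℝ → ℝ → ℝ) (s t : ℝ) : ℝ :=
  ∫ u in t..T, ∫ z : ℝ, Psifun κ σ r γ ϖ T h z u * phifun κ σ r γ T s t z u

/-- The bound `B₁`. -/
def Bb1 (σ γ ϖ T : ℝ) : ℝ :=
  (1 - γ) / σ ^ 2 *
    (Real.sqrt (Real.pi / (2 * T)) +
      Real.sqrt (|Real.pi - 4 * T * σ ^ 2 * ϖ ^ (1 / (γ - 1))| / (2 * T)))

/-- The bound `B₀`. -/
def Bb0 (κ σ r γ ϖ T : ℝ) : ℝ :=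
  (gfun κ σ r γ T 0 * σ ^ 2 / 2 + r * γ + (1 - γ) * ϖ ^ (1 / (γ - 1)) +
    gam1 σ γ / 2 * Bb1 σ γ ϖ T ^ 2) * T

/-- Membership in the space `𝒳`. -/
def MemX (κ σ r γ ϖ T : ℝ) (h : ℝ → ℝ → ℝ) : Prop :=
  ContinuousOn (fun p : ℝ × ℝ => h p.1 p.2) (Set.univ ×ˢ Set.Icc 0 T) ∧
  (∀ t ∈ Set.Icc (0 : ℝ) T, ∀ s : ℝ, DifferentiableAt ℝ (fun s' => h s' t) s) ∧
  ContinuousOn (fun p : ℝ × ℝ => deriv (fun s' => h s' p.2) p.1) (Set.univ ×ˢ Set.Icc 0 T) ∧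
  ∀ s : ℝ, ∀ t ∈ Set.Icc (0 : ℝ) T,
    0 ≤ h s t ∧ h s t ≤ Bb0 κ σ r γ ϖ T ∧ |deriv (fun s' => h s' t) s| ≤ Bb1 σ γ ϖ T

/-- The metric `ρ_κ̂` on `𝒳`. -/
def rhoX (T kh : ℝ) (f h : ℝ → ℝ → ℝ) : ℝ :=
  ⨆ p : ℝ × Set.Icc (0 : ℝ) T,
    Real.exp (-kh * (T - (p.2 : ℝ))) *
      (|h p.1 (p.2 : ℝ) - f p.1 (p.2 : ℝ)| +
        |deriv (fun s' => h s' (p.2 : ℝ)) p.1 - deriv (fun s' => f s' (p.2 : ℝ)) p.1|)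

/-- The Picard iterates `h₀ = 0`, `h_{n+1} = ℒ_{h_n}`. -/
def picard (κ σ r γ ϖ T : ℝ) : ℕ → ℝ → ℝ → ℝ
  | 0 => fun _ _ => 0
  | n + 1 => FK κ σ r γ ϖ T (picard κ σ r γ ϖ T n)

/-! The `s`-derivative of the kernel is `μ (z - s μ) / σ₁² · φ`, so after the translation
`z ↦ z - s μ` its total variation is a first absolute moment of a centred Gaussian of variance
`σ₁²`, namely `√(2/π) μ / σ₁`. For the bound, `g₁ ≤ 0` makes `z ↦ μ(u,z)` nondecreasing on
`[t,u]`, so `σ₁(u,t)² ≥ σ² (u - t) μ(u,t)²`. -/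

lemma integral_Ioi_mul_exp_neg_mul_sq {b : ℝ} (hb : 0 < b) :
    ∫ x in Ioi (0 : ℝ), x * exp (-b * x ^ 2) = (2 * b)⁻¹ := by
  have hc : ∫ x in Ioi (0 : ℝ), (x : ℂ) * Complex.exp (-(b : ℂ) * (x : ℂ) ^ 2)
      = ((∫ x in Ioi (0 : ℝ), x * exp (-b * x ^ 2) : ℝ) : ℂ) := by
    rw [← RCLike.ofReal_eq_complex_ofReal, ← integral_ofReal]
    congr 1 with x
    simp
  exact_mod_cast hc.symm.trans (integral_mul_cexp_neg_mul_sq (by rwa [Complex.ofReal_re]))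

lemma integral_abs_mul_exp_neg_mul_sq {b : ℝ} (hb : 0 < b) :
    ∫ x : ℝ, |x| * exp (-b * x ^ 2) = b⁻¹ := by
  have h := integral_comp_abs (f := fun x : ℝ => x * exp (-b * x ^ 2))
  simp only [sq_abs] at h
  rw [h, integral_Ioi_mul_exp_neg_mul_sq hb, mul_inv]
  ring

lemma hasDerivAt_gaussian_kernel (m σ₁ z s : ℝ) :
    HasDerivAt (fun s' => (√(2 * π) * σ₁)⁻¹ * exp (-(z - s' * m) ^ 2 / (2 * σ₁ ^ 2)))
      ((√(2 * π) * σ₁)⁻¹ * (exp (-(z - s * m) ^ 2 / (2 * σ₁ ^ 2)) *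
        (m * (z - s * m) / σ₁ ^ 2))) s := by
  have hlin : HasDerivAt (fun s' : ℝ => z - s' * m) (-m) s := by
    simpa using ((hasDerivAt_id s).mul_const m).const_sub z
  have hquad : HasDerivAt (fun s' : ℝ => -(z - s' * m) ^ 2 / (2 * σ₁ ^ 2))
      (m * (z - s * m) / σ₁ ^ 2) s := by
    refine ((hlin.fun_pow 2).fun_neg.div_const (2 * σ₁ ^ 2)).congr_deriv ?_
    ring
  exact hquad.exp.const_mul _

lemma integral_abs_deriv_gaussian_kernel {σ₁ : ℝ} (hσ₁ : 0 < σ₁) (m s : ℝ) :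
    ∫ z, |deriv (fun s' => (√(2 * π) * σ₁)⁻¹ * exp (-(z - s' * m) ^ 2 / (2 * σ₁ ^ 2))) s|
      = √(2 / π) * |m| / σ₁ := by
  have habs : ∀ z, |deriv (fun s' => (√(2 * π) * σ₁)⁻¹ *
      exp (-(z - s' * m) ^ 2 / (2 * σ₁ ^ 2))) s|
      = (√(2 * π) * σ₁)⁻¹ * |m| / σ₁ ^ 2 *
        (|z - s * m| * exp (-(2 * σ₁ ^ 2)⁻¹ * (z - s * m) ^ 2)) := by
    intro z
    rw [(hasDerivAt_gaussian_kernel m σ₁ z s).deriv, abs_mul, abs_mul, abs_div, abs_mul,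
      abs_of_pos (by positivity : 0 < (√(2 * π) * σ₁)⁻¹), abs_of_pos (exp_pos _),
      abs_of_pos (by positivity : 0 < σ₁ ^ 2)]
    ring_nf
  simp_rw [habs]
  rw [integral_const_mul, integral_sub_right_eq_self
      (fun x => |x| * exp (-(2 * σ₁ ^ 2)⁻¹ * x ^ 2)) (s * m),
    integral_abs_mul_exp_neg_mul_sq (by positivity), inv_inv]
  have hsqrt : √(2 / π) = 2 / √(2 * π) := by
    rw [eq_div_iff (by positivity), ← sqrt_mul (by positivity),
      show 2 / π * (2 * π) = 2 ^ 2 by field_simp, sqrt_sq zero_le_two]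
  rw [hsqrt]
  field_simp

lemma monotoneOn_integral_of_nonpos {f : ℝ → ℝ} {t u : ℝ} (hf : IntervalIntegrable f volume t u)
    (hf0 : ∀ x ∈ Icc t u, f x ≤ 0) : MonotoneOn (fun z => ∫ v in z..u, f v) (Icc t u) := by
  intro a ha b hb hab
  have hint : ∀ {c d}, c ∈ Icc t u → d ∈ Icc t u → IntervalIntegrable f volume c d :=
    fun hc hd => hf.mono_set (uIcc_subset_uIcc (Icc_subset_uIcc hc) (Icc_subset_uIcc hd))
  have hab0 : ∫ v in a..b, f v ≤ 0 := by
    simpa using intervalIntegral.integral_mono_on hab (hint ha hb) intervalIntegrable_const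
      fun x hx => hf0 x ⟨ha.1.trans hx.1, hx.2.trans hb.2⟩
  have hsplit := intervalIntegral.integral_add_adjacent_intervals (hint ha hb)
    (hint hb ⟨hb.1.trans hb.2, le_rfl⟩)
  show ∫ v in a..u, f v ≤ ∫ v in b..u, f v
  linarith

section Riccati

variable {κ σ r γ T : ℝ}

lemma gam1_pos (hσ : 0 < σ) (hγ1 : γ < 1) : 0 < gam1 σ γ :=
  div_pos (by positivity) (by linarith)

lemma gc2_pos (hκ : 0 < κ) (hσ : 0 < σ) (hr0 : 0 ≤ r) (hγ0 : 0 ≤ γ) (hγ1 : γ < 1) :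
    0 < gc2 κ σ r γ := by
  have hγ1' : 0 < 1 - γ := by linarith
  have : 0 < gam2 κ σ r γ := by unfold gam2; positivity
  exact div_pos this (gam1_pos hσ hγ1)

lemma theta_le_gc2 (hκ : 0 < κ) (hσ : 0 < σ) (hr0 : 0 ≤ r) (hγ0 : 0 ≤ γ) (hγ1 : γ < 1) :
    theta κ σ r γ ≤ gc2 κ σ r γ := by
  have hγ1' : 0 < 1 - γ := by linarith
  have hgc3 : 0 ≤ gc3 κ σ r γ := by
    have := gam1_pos hσ hγ1
    unfold gc3 gam3; positivity
  calc theta κ σ r γ ≤ √(gc2 κ σ r γ ^ 2) := sqrt_le_sqrt (by linarith)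
    _ = gc2 κ σ r γ := sqrt_sq (gc2_pos hκ hσ hr0 hγ0 hγ1).le

lemma two_mul_theta_le_riccati_denom (hκ : 0 < κ) (hσ : 0 < σ) (hr0 : 0 ≤ r) (hγ0 : 0 ≤ γ)
    (hγ1 : γ < 1) {v : ℝ} (hv : v ≤ T) :
    2 * theta κ σ r γ ≤ exp (2 * theta κ σ r γ * gam1 σ γ * (T - v)) *
      (gc2 κ σ r γ + theta κ σ r γ) - gc2 κ σ r γ + theta κ σ r γ := by
  have hθ : 0 ≤ theta κ σ r γ := sqrt_nonneg _
  have hexp : 1 ≤ exp (2 * theta κ σ r γ * gam1 σ γ * (T - v)) := by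
    have := gam1_pos hσ hγ1
    have : 0 ≤ T - v := by linarith
    exact one_le_exp (by positivity)
  have := gc2_pos hκ hσ hr0 hγ0 hγ1
  nlinarith

lemma g1fun_nonpos (hκ : 0 < κ) (hσ : 0 < σ) (hr0 : 0 ≤ r) (hγ0 : 0 ≤ γ) (hγ1 : γ < 1)
    {v : ℝ} (hv : v ≤ T) : g1fun κ σ r γ T v ≤ 0 := by
  have hθ : 0 ≤ theta κ σ r γ := sqrt_nonneg _
  have hden := two_mul_theta_le_riccati_denom hκ hσ hr0 hγ0 hγ1 hv
  have hgap := theta_le_gc2 hκ hσ hr0 hγ0 hγ1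
  have hgfun : gfun κ σ r γ T v ≤ gc2 κ σ r γ := by
    have : 0 ≤ 2 * theta κ σ r γ * (gc2 κ σ r γ - theta κ σ r γ) /
        (exp (2 * theta κ σ r γ * gam1 σ γ * (T - v)) * (gc2 κ σ r γ + theta κ σ r γ) -
          gc2 κ σ r γ + theta κ σ r γ) :=
      div_nonneg (by nlinarith) (by linarith)
    unfold gfun; linarith
  have hg1 : g1fun κ σ r γ T v = gam1 σ γ * (gfun κ σ r γ T v - gc2 κ σ r γ) := by
    rw [g1fun, gc2, mul_sub, mul_div_cancel₀ _ (gam1_pos hσ hγ1).ne']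
  rw [hg1]
  exact mul_nonpos_of_nonneg_of_nonpos (gam1_pos hσ hγ1).le (by linarith)

lemma continuousOn_g1fun (hκ : 0 < κ) (hσ : 0 < σ) (hr0 : 0 ≤ r) (hγ0 : 0 ≤ γ) (hγ1 : γ < 1) :
    ContinuousOn (g1fun κ σ r γ T) (Iic T) := by
  have hθ : 0 ≤ theta κ σ r γ := sqrt_nonneg _
  rcases hθ.eq_or_lt with hθ | hθ
  · unfold g1fun gfun
    simp only [← hθ, mul_zero, zero_mul, zero_div, sub_zero]
    exact continuousOn_const
  · unfold g1fun gfun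
    refine continuousOn_const.mul (continuousOn_const.sub (continuousOn_const.div
      (by fun_prop) fun v hv => ?_)) |>.sub continuousOn_const
    have := two_mul_theta_le_riccati_denom hκ hσ hr0 hγ0 hγ1 (T := T) hv
    linarith

lemma monotoneOn_mufun (hκ : 0 < κ) (hσ : 0 < σ) (hr0 : 0 ≤ r) (hγ0 : 0 ≤ γ) (hγ1 : γ < 1)
    {t u : ℝ} (htu : t ≤ u) (huT : u ≤ T) :
    MonotoneOn (fun z => mufun κ σ r γ T u z) (Icc t u) := by
  have hint : IntervalIntegrable (g1fun κ σ r γ T) volume t u := by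
    refine ((continuousOn_g1fun hκ hσ hr0 hγ0 hγ1).mono fun x hx => ?_).intervalIntegrable
    rw [uIcc_of_le htu] at hx
    exact hx.2.trans huT
  exact fun a ha b hb hab => exp_le_exp.mpr <| monotoneOn_integral_of_nonpos hint
    (fun x hx => g1fun_nonpos hκ hσ hr0 hγ0 hγ1 (hx.2.trans huT)) ha hb hab

lemma mul_sqrt_mul_mufun_le_sig1fun (hκ : 0 < κ) (hσ : 0 < σ) (hr0 : 0 ≤ r) (hγ0 : 0 ≤ γ)
    (hγ1 : γ < 1) {t u : ℝ} (htu : t ≤ u) (huT : u ≤ T) :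
    σ * √(u - t) * mufun κ σ r γ T u t ≤ sig1fun κ σ r γ T u t := by
  have hmono := monotoneOn_mufun hκ hσ hr0 hγ0 hγ1 htu huT
  have hμ : 0 < mufun κ σ r γ T u t := exp_pos _
  have hsq : MonotoneOn (fun z => mufun κ σ r γ T u z ^ 2) (Icc t u) :=
    fun a ha b hb hab => pow_le_pow_left₀ (exp_pos _).le (hmono ha hb hab) 2
  have hlow : (u - t) * mufun κ σ r γ T u t ^ 2 ≤ ∫ z in t..u, mufun κ σ r γ T u z ^ 2 := by
    simpa using intervalIntegral.integral_mono_on htu intervalIntegrable_const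
      (MonotoneOn.intervalIntegrable (μ := volume) (by rwa [uIcc_of_le htu]))
      fun z hz => hsq ⟨le_rfl, htu⟩ hz hz.1
  calc σ * √(u - t) * mufun κ σ r γ T u t
      = √(σ ^ 2 * ((u - t) * mufun κ σ r γ T u t ^ 2)) := by
        rw [show σ ^ 2 * ((u - t) * mufun κ σ r γ T u t ^ 2)
            = (σ * √(u - t) * mufun κ σ r γ T u t) ^ 2 by
              rw [mul_pow, mul_pow, sq_sqrt (sub_nonneg.2 htu)]; ring,
          sqrt_sq (mul_nonneg (mul_nonneg hσ.le (sqrt_nonneg _)) hμ.le)]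
    _ ≤ sig1fun κ σ r γ T u t := sqrt_le_sqrt (mul_le_mul_of_nonneg_left hlow (sq_nonneg σ))

end Riccati

theorem total_variation_deriv_kernel_general (κ σ r γ T : ℝ)
    (hκ : 0 < κ) (hσ : 0 < σ) (hr0 : 0 ≤ r)
    (hγ0 : 0 < γ) (hγ1 : γ < 1) :
    ∀ s t u : ℝ, 0 ≤ t → t < u → u ≤ T →
      (∫ z : ℝ, |deriv (fun s' => phifun κ σ r γ T s' t z u) s|) =
        Real.sqrt (2 / Real.pi) * mufun κ σ r γ T u t / sig1fun κ σ r γ T u t ∧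
      (∫ z : ℝ, |deriv (fun s' => phifun κ σ r γ T s' t z u) s|) ≤
        Real.sqrt (2 / Real.pi) / σ / Real.sqrt (u - t) := by
  intro s t u _ htu huT
  have hμ : 0 < mufun κ σ r γ T u t := exp_pos _
  have hlow := mul_sqrt_mul_mufun_le_sig1fun hκ hσ hr0 hγ0.le hγ1 htu.le huT
  have hlow_pos : 0 < σ * √(u - t) * mufun κ σ r γ T u t := by
    have := sqrt_pos.2 (sub_pos.2 htu)
    positivity
  have htv : ∫ z, |deriv (fun s' => phifun κ σ r γ T s' t z u) s|
      = √(2 / π) * mufun κ σ r γ T u t / sig1fun κ σ r γ T u t := by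
    simpa only [phifun, abs_of_pos hμ] using
      integral_abs_deriv_gaussian_kernel (hlow_pos.trans_le hlow) (mufun κ σ r γ T u t) s
  refine ⟨htv, htv ▸ ?_⟩
  calc √(2 / π) * mufun κ σ r γ T u t / sig1fun κ σ r γ T u t
      ≤ √(2 / π) * mufun κ σ r γ T u t / (σ * √(u - t) * mufun κ σ r γ T u t) := by
        gcongr
    _ = √(2 / π) / σ / √(u - t) := by
        field_simp

/-- for all `s` and `0 ≤ t < u ≤ T`,
`∫_ℝ |∂_s φ(s,t,z,u)| dz = √(2/π) μ(u,t)/σ₁(u,t) ≤ √(2/π)/(σ√(u−t))`. -/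
theorem total_variation_deriv_kernel (κ σ r γ ϖ T : ℝ)
    (hκ : 0 < κ) (hσ : 0 < σ) (hr0 : 0 ≤ r) (hrκ : r ≤ κ)
    (hγ0 : 0 < γ) (hγ1 : γ < 1) (hϖ : 0 < ϖ) (hT : 0 < T) :
    ∀ s t u : ℝ, 0 ≤ t → t < u → u ≤ T →
      (∫ z : ℝ, |deriv (fun s' => phifun κ σ r γ T s' t z u) s|) =
        Real.sqrt (2 / Real.pi) * mufun κ σ r γ T u t / sig1fun κ σ r γ T u t ∧
      (∫ z : ℝ, |deriv (fun s' => phifun κ σ r γ T s' t z u) s|) ≤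
        Real.sqrt (2 / Real.pi) / σ / Real.sqrt (u - t) :=
  total_variation_deriv_kernel_general κ σ r γ T hκ hσ hr0 hγ0 hγ1
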